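/- Let n ≥ 1, let c ≤ t be natural numbers, let σ : ℕ → ℝ be strictly increasing with σ_0 = 0, and let ε be a random vector in ℝⁿ with 0 < E‖ε‖² < ∞. Let a₀ be a random vector in ℝⁿ, and set a_t := a₀ + σ_t ε (a sample of the noisier policy πᵗ) and, for 0 ≤ t' ≤ c, model perfect denoising of a_c := a₀ + σ_c ε by t' steps as producing a₀ + σ_{c−t'} ε. Define Q(t') := −E‖a_t − (a₀ + σ_{c−t'} ε)‖² for t' ∈ {0, 1, …, c}. Then Q(0) > Q(t') for every t' ∈ {1, …, c}; that is, 0 is the unique maximizer of Q, so the conditioned Q-function Q_{θ,t'}(πᵗ | π^c) of a policy πᵗ given a cleaner version π^c is maximized at t' = 0. -/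
import Mathlib


open MeasureTheory

/-- Proposition 4: for a noisier sample `a_t = a₀ + σ_t ε` and perfect
`t'`-step denoising of the cleaner sample `a_c = a₀ + σ_c ε` producing
`a₀ + σ_{c-t'} ε`, the conditioned Q-function
`Q(t') = -E‖a_t - (a₀ + σ_{c-t'} ε)‖²` is uniquely maximized at `t' = 0`:
`Q(0) > Q(t')` for every `t' ∈ {1,…,c}`. -/
theorem smile_cleaner_policy_argmax_zero
    (n : ℕ) (hn : 1 ≤ n)
    {Ω : Type*} [MeasurableSpace Ω] (P : Measure Ω) [IsProbabilityMeasure P]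
    (c t : ℕ) (hct : c ≤ t)
    (σ : ℕ → ℝ) (hσmono : StrictMono σ) (hσ0 : σ 0 = 0)
    (a₀ ε : Ω → EuclideanSpace ℝ (Fin n))
    (hεint : Integrable (fun ω => ‖ε ω‖ ^ 2) P)
    (hεpos : 0 < ∫ ω, ‖ε ω‖ ^ 2 ∂P)
    (Qf : ℕ → ℝ)
    (hQf : ∀ t', Qf t'
        = -∫ ω, ‖(a₀ ω + σ t • ε ω) - (a₀ ω + σ (c - t') • ε ω)‖ ^ 2 ∂P) :
    ∀ t', 1 ≤ t' → t' ≤ c → Qf t' < Qf 0 := by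
  have key : ∀ s : ℕ, Qf s = -((σ t - σ (c - s)) ^ 2 * ∫ ω, ‖ε ω‖ ^ 2 ∂P) := by
    intro s
    rw [hQf s]
    congr 1
    rw [← integral_const_mul]
    apply integral_congr_ae
    filter_upwards with ω
    have : (a₀ ω + σ t • ε ω) - (a₀ ω + σ (c - s) • ε ω)
        = (σ t - σ (c - s)) • ε ω := by
      rw [sub_smul]; abel
    rw [this, norm_smul, mul_pow, Real.norm_eq_abs, sq_abs]
  intro t' h1 h2
  rw [key, key]
  simp only [Nat.sub_zero, neg_lt_neg_iff]
  apply mul_lt_mul_of_pos_right _ hεpos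
  have hlt : σ (c - t') < σ c := hσmono (Nat.sub_lt_self h1 h2)
  have hle : σ c ≤ σ t := hσmono.monotone hct
  have h0 : 0 ≤ σ t - σ c := by linarith
  have h0' : σ t - σ c < σ t - σ (c - t') := by linarith
  nlinarith
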